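/- arXiv:1804.05247 — 2 statements merged into one kernel-verified Lean document; each statement's English description precedes it below -/
import Mathlib

section
/- The Gauss-sum quantity A_k(m) = Σ_{h=1,(h,k)=1}^{k} (k^{-1} Σ_{j=1}^{k} e^{2πi h j²/k})^s · e^{-2πi m h/k} is multiplicative in k: for coprime positive integers k₁, k₂, A_{k₁k₂}(m) = A_{k₁}(m)·A_{k₂}(m). -/
open scoped BigOperators Real

/-- Hardy's Gauss-sum quantity
`A_k(m) = Σ_{1 ≤ h ≤ k, gcd(h,k)=1} (k⁻¹ Σ_{j=1}^k e^{2πi h j²/k})^s · e^{-2πi m h/k}`. -/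
noncomputable def hardyA (s : ℕ) (m : ℕ) (k : ℕ) : ℂ :=
  ∑ h ∈ (Finset.Icc 1 k).filter (fun h => Nat.gcd h k = 1),
    ((k : ℂ)⁻¹ * ∑ j ∈ Finset.Icc 1 k,
        Complex.exp (2 * Real.pi * Complex.I * h * j ^ 2 / k)) ^ s *
      Complex.exp (-(2 * Real.pi * Complex.I * m * h / k))

open Complex Finset

noncomputable def EE (k : ℕ) (a : ℤ) : ℂ := Complex.exp (2 * Real.pi * Complex.I * a / k)

lemma EE_add (k : ℕ) (a b : ℤ) : EE k (a + b) = EE k a * EE k b := by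
  rw [EE, EE, EE, ← Complex.exp_add]
  congr 1
  push_cast
  ring

lemma EE_self_mul (k : ℕ) (a : ℤ) : EE k (k * a) = 1 := by
  rcases eq_or_ne k 0 with rfl | hk
  · norm_num [EE]
  · have h1 : (k : ℂ) ≠ 0 := Nat.cast_ne_zero.mpr hk
    rw [EE, show 2 * Real.pi * Complex.I * ((k : ℤ) * a : ℤ) / k = a * (2 * Real.pi * Complex.I) by
      push_cast; field_simp]
    exact Complex.exp_int_mul_two_pi_mul_I a

lemma EE_congr {k : ℕ} {a b : ℤ} (h : (k : ℤ) ∣ a - b) : EE k a = EE k b := by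
  obtain ⟨t, ht⟩ := h
  have : a = b + k * t := by linarith
  rw [this, EE_add, EE_self_mul, mul_one]

lemma EE_zmod {k : ℕ} {a b : ℤ} (h : (a : ZMod k) = (b : ZMod k)) :
    EE k a = EE k b :=
  EE_congr ((ZMod.intCast_zmod_eq_zero_iff_dvd _ k).mp (by push_cast; rw [h]; ring))

lemma EE_split {k₁ k₂ : ℕ} (hk₁ : k₁ ≠ 0) (hk₂ : k₂ ≠ 0) {b₁ b₂ : ℤ}
    (hb : b₁ * k₁ + b₂ * k₂ = 1) (x : ℤ) :
    EE (k₁ * k₂) x = EE k₁ (b₂ * x) * EE k₂ (b₁ * x) := by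
  rw [EE, EE, EE, ← Complex.exp_add]
  congr 1
  have h1 : (k₁ : ℂ) ≠ 0 := Nat.cast_ne_zero.mpr hk₁
  have h2 : (k₂ : ℂ) ≠ 0 := Nat.cast_ne_zero.mpr hk₂
  have hb' : (b₁ : ℂ) * k₁ + b₂ * k₂ = 1 := by exact_mod_cast congrArg (Int.cast : ℤ → ℂ) hb
  push_cast
  field_simp
  linear_combination (-(x:ℂ)) * hb'

noncomputable def GG (k : ℕ) [NeZero k] (x : ZMod k) : ℂ :=
  ∑ j : ZMod k, EE k ((x * j ^ 2).val)

/-- summand of hardyA, as a function of `x = h mod k`. -/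
noncomputable def FF (s m k : ℕ) [NeZero k] (x : ZMod k) : ℂ :=
  ((k : ℂ)⁻¹ * GG k x) ^ s * EE k (-(m * (x.val : ℤ)))

lemma sum_Icc_eq_sum_zmod {M : Type*} [AddCommMonoid M] (k : ℕ) [NeZero k]
    (g : ZMod k → M) :
    ∑ j ∈ Finset.Icc 1 k, g (j : ZMod k) = ∑ t : ZMod k, g t := by
  have hk : 0 < k := Nat.pos_of_ne_zero (NeZero.ne k)
  refine Finset.sum_nbij' (fun j => (j : ZMod k)) (fun t => if t = 0 then k else t.val)
    (fun a _ => Finset.mem_univ _) ?_ ?_ ?_ (fun a _ => rfl)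
  · intro t _
    by_cases ht : t = 0
    · rw [if_pos ht]; exact Finset.mem_Icc.mpr ⟨hk, le_rfl⟩
    · rw [if_neg ht]
      exact Finset.mem_Icc.mpr ⟨Nat.one_le_iff_ne_zero.mpr
        (fun h0 => ht ((ZMod.val_eq_zero t).mp h0)), le_of_lt (ZMod.val_lt t)⟩
  · intro a ha
    rw [Finset.mem_Icc] at ha
    by_cases h0 : (a : ZMod k) = 0
    · rw [if_pos h0]
      have hdvd : k ∣ a := (ZMod.natCast_eq_zero_iff a k).mp h0
      have := Nat.le_of_dvd (by omega) hdvd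
      omega
    · rw [if_neg h0, ZMod.val_natCast, Nat.mod_eq_of_lt]
      rcases lt_or_eq_of_le ha.2 with h | h
      · exact h
      · exact absurd (h ▸ ZMod.natCast_self k) h0
  · intro t _
    by_cases ht : t = 0
    · rw [if_pos ht, ht, ZMod.natCast_self]
    · rw [if_neg ht, ZMod.natCast_zmod_val]

lemma bridge (s m k : ℕ) [NeZero k] :
    hardyA s m k = ∑ u : (ZMod k)ˣ, FF s m k (u : ZMod k) := by
  have hk : 0 < k := Nat.pos_of_ne_zero (NeZero.ne k)
  have himg : (Finset.univ.image (fun u : (ZMod k)ˣ => (u : ZMod k)))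
      = Finset.univ.filter (fun x : ZMod k => IsUnit x) := by
    ext x
    simp only [Finset.mem_image, Finset.mem_univ, true_and, Finset.mem_filter]
    exact Iff.rfl
  rw [show (∑ u : (ZMod k)ˣ, FF s m k (u : ZMod k))
      = ∑ x ∈ Finset.univ.filter (fun x : ZMod k => IsUnit x), FF s m k x by
    rw [← himg, Finset.sum_image (fun a _ b _ h => Units.ext h)]]
  rw [hardyA]
  refine Finset.sum_nbij' (fun h => (h : ZMod k)) (fun x => if x = 0 then k else x.val)
    ?_ ?_ ?_ ?_ ?_
  · intro h hh
    rw [Finset.mem_filter, Finset.mem_Icc] at hh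
    exact Finset.mem_filter.mpr ⟨Finset.mem_univ _, (ZMod.isUnit_iff_coprime h k).mpr hh.2⟩
  · intro x hx
    rw [Finset.mem_filter] at hx
    by_cases ht : x = 0
    · rw [if_pos ht]
      have hk1 : k = 1 := by
        have h1 : ((1:ℕ) : ZMod k) = 0 := by
          simpa using (isUnit_zero_iff.mp (ht ▸ hx.2)).symm
        exact Nat.dvd_one.mp ((ZMod.natCast_eq_zero_iff 1 k).mp h1)
      subst hk1
      simp
    · rw [if_neg ht]
      obtain ⟨u, rfl⟩ := hx.2
      exact Finset.mem_filter.mpr ⟨Finset.mem_Icc.mpr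
        ⟨Nat.one_le_iff_ne_zero.mpr (fun h0 => ht ((ZMod.val_eq_zero _).mp h0)),
          le_of_lt (ZMod.val_lt _)⟩, ZMod.val_coe_unit_coprime u⟩
  · intro a ha
    rw [Finset.mem_filter, Finset.mem_Icc] at ha
    by_cases h0 : (a : ZMod k) = 0
    · rw [if_pos h0]
      have hdvd : k ∣ a := (ZMod.natCast_eq_zero_iff a k).mp h0
      have := Nat.le_of_dvd (by omega) hdvd
      omega
    · rw [if_neg h0, ZMod.val_natCast, Nat.mod_eq_of_lt]
      rcases lt_or_eq_of_le ha.1.2 with h | h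
      · exact h
      · exact absurd (h ▸ ZMod.natCast_self k) h0
  · intro x _
    by_cases ht : x = 0
    · rw [if_pos ht, ht, ZMod.natCast_self]
    · rw [if_neg ht, ZMod.natCast_zmod_val]
  · intro h hh
    have hinner : (∑ j ∈ Finset.Icc 1 k,
        Complex.exp (2 * Real.pi * Complex.I * h * j ^ 2 / k)) = GG k (h : ZMod k) := by
      refine Eq.trans (Finset.sum_congr rfl fun j _ => ?_)
        (sum_Icc_eq_sum_zmod k (fun t : ZMod k => EE k (((h : ZMod k) * t ^ 2).val)))
      rw [show Complex.exp (2 * Real.pi * Complex.I * h * j ^ 2 / k)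
          = EE k ((h : ℤ) * (j : ℤ) ^ 2) by rw [EE]; congr 1; push_cast; ring]
      apply EE_zmod
      push_cast [ZMod.natCast_zmod_val]
      ring
    rw [hinner, FF]
    congr 1
    rw [show Complex.exp (-(2 * Real.pi * Complex.I * m * h / k))
        = EE k (-(m * (h : ℤ))) by rw [EE]; congr 1; push_cast; ring]
    apply EE_zmod
    push_cast [ZMod.natCast_zmod_val]
    ring

lemma crt_fst {k₁ k₂ : ℕ} [NeZero k₁] [NeZero k₂] (hcop : Nat.Coprime k₁ k₂)
    (j : ZMod (k₁ * k₂)) :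
    (ZMod.chineseRemainder hcop j).1 = ((j.val : ℕ) : ZMod k₁) := by
  have h : (ZMod.chineseRemainder hcop) j
      = ZMod.castHom (show Nat.lcm k₁ k₂ ∣ k₁ * k₂ by simp [Nat.lcm_dvd_iff])
          (ZMod k₁ × ZMod k₂) j := rfl
  rw [h, ZMod.castHom_apply, Prod.fst_zmod_cast, ← ZMod.natCast_val]

lemma crt_snd {k₁ k₂ : ℕ} [NeZero k₁] [NeZero k₂] (hcop : Nat.Coprime k₁ k₂)
    (j : ZMod (k₁ * k₂)) :
    (ZMod.chineseRemainder hcop j).2 = ((j.val : ℕ) : ZMod k₂) := by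
  have h : (ZMod.chineseRemainder hcop) j
      = ZMod.castHom (show Nat.lcm k₁ k₂ ∣ k₁ * k₂ by simp [Nat.lcm_dvd_iff])
          (ZMod k₁ × ZMod k₂) j := rfl
  rw [h, ZMod.castHom_apply, Prod.snd_zmod_cast, ← ZMod.natCast_val]

lemma GG_mult {k₁ k₂ : ℕ} [NeZero k₁] [NeZero k₂] (hcop : Nat.Coprime k₁ k₂)
    {b₁ b₂ : ℤ} (hb : b₁ * k₁ + b₂ * k₂ = 1) (x : ZMod (k₁ * k₂)) :
    GG (k₁ * k₂) x = GG k₁ ((b₂ * (x.val : ℤ) : ℤ) : ZMod k₁) *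
      GG k₂ ((b₁ * (x.val : ℤ) : ℤ) : ZMod k₂) := by
  haveI : NeZero (k₁ * k₂) := ⟨mul_ne_zero (NeZero.ne k₁) (NeZero.ne k₂)⟩
  have key : ∀ j : ZMod (k₁ * k₂),
      EE (k₁ * k₂) ((x * j ^ 2).val)
        = (fun p : ZMod k₁ × ZMod k₂ =>
            EE k₁ ((((b₂ * (x.val : ℤ) : ℤ) : ZMod k₁) * p.1 ^ 2).val) *
            EE k₂ ((((b₁ * (x.val : ℤ) : ℤ) : ZMod k₂) * p.2 ^ 2).val))
          ((ZMod.chineseRemainder hcop).toEquiv j) := by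
    intro j
    have hc1 : ((ZMod.chineseRemainder hcop).toEquiv j).1 = ((j.val : ℕ) : ZMod k₁) :=
      crt_fst hcop j
    have hc2 : ((ZMod.chineseRemainder hcop).toEquiv j).2 = ((j.val : ℕ) : ZMod k₂) :=
      crt_snd hcop j
    dsimp only
    rw [hc1, hc2]
    have e0 : EE (k₁ * k₂) ((x * j ^ 2).val)
        = EE (k₁ * k₂) ((x.val : ℤ) * (j.val : ℤ) ^ 2) := by
      apply EE_zmod
      push_cast [ZMod.natCast_zmod_val]
      ring
    rw [e0, EE_split (NeZero.ne k₁) (NeZero.ne k₂) hb]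
    congr 1
    · apply EE_zmod
      push_cast [ZMod.natCast_zmod_val]
      ring
    · apply EE_zmod
      push_cast [ZMod.natCast_zmod_val]
      ring
  rw [GG,
    Fintype.sum_equiv (ZMod.chineseRemainder hcop).toEquiv _
      (fun p : ZMod k₁ × ZMod k₂ =>
        EE k₁ ((((b₂ * (x.val : ℤ) : ℤ) : ZMod k₁) * p.1 ^ 2).val) *
        EE k₂ ((((b₁ * (x.val : ℤ) : ℤ) : ZMod k₂) * p.2 ^ 2).val)) key,
    Fintype.sum_prod_type]
  dsimp only
  rw [← Finset.sum_mul_sum]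
  rfl

theorem hardyA_multiplicative' (s m k₁ k₂ : ℕ) (h₁ : 0 < k₁) (h₂ : 0 < k₂)
    (hcop : Nat.Coprime k₁ k₂) :
    hardyA s m (k₁ * k₂) = hardyA s m k₁ * hardyA s m k₂ := by
  haveI : NeZero k₁ := ⟨h₁.ne'⟩
  haveI : NeZero k₂ := ⟨h₂.ne'⟩
  haveI : NeZero (k₁ * k₂) := ⟨mul_ne_zero h₁.ne' h₂.ne'⟩
  obtain ⟨b₁, b₂, hb⟩ : ∃ b₁ b₂ : ℤ, b₁ * k₁ + b₂ * k₂ = 1 :=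
    Nat.isCoprime_iff_coprime.mpr hcop
  rw [bridge, bridge, bridge]
  have hbk₁ : (b₂ : ZMod k₁) * (k₂ : ZMod k₁) = 1 := by
    have := congrArg (Int.cast : ℤ → ZMod k₁) hb
    push_cast [ZMod.natCast_self] at this
    simpa using this
  have hbk₂ : (b₁ : ZMod k₂) * (k₁ : ZMod k₂) = 1 := by
    have := congrArg (Int.cast : ℤ → ZMod k₂) hb
    push_cast [ZMod.natCast_self] at this
    simpa using this
  set β₂ : (ZMod k₁)ˣ := ⟨(b₂ : ZMod k₁), (k₂ : ZMod k₁), hbk₁, by rw [mul_comm]; exact hbk₁⟩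
    with hβ₂
  set β₁ : (ZMod k₂)ˣ := ⟨(b₁ : ZMod k₂), (k₁ : ZMod k₂), hbk₂, by rw [mul_comm]; exact hbk₂⟩
    with hβ₁
  set Φ : (ZMod (k₁ * k₂))ˣ ≃ (ZMod k₁)ˣ × (ZMod k₂)ˣ :=
    ((Units.mapEquiv (ZMod.chineseRemainder hcop).toMulEquiv).trans
      MulEquiv.prodUnits).toEquiv.trans
      (Equiv.prodCongr (Equiv.mulLeft β₂) (Equiv.mulLeft β₁)) with hΦ
  have hΦ1 : ∀ u : (ZMod (k₁ * k₂))ˣ,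
      ((Φ u).1 : ZMod k₁) = ((b₂ * (((u : ZMod (k₁ * k₂)).val : ℕ) : ℤ) : ℤ) : ZMod k₁) := by
    intro u
    have h0 : ((Φ u).1 : ZMod k₁)
        = (b₂ : ZMod k₁) * ((ZMod.chineseRemainder hcop) (u : ZMod (k₁ * k₂))).1 := rfl
    rw [h0, crt_fst hcop]
    push_cast
    ring
  have hΦ2 : ∀ u : (ZMod (k₁ * k₂))ˣ,
      ((Φ u).2 : ZMod k₂) = ((b₁ * (((u : ZMod (k₁ * k₂)).val : ℕ) : ℤ) : ℤ) : ZMod k₂) := by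
    intro u
    have h0 : ((Φ u).2 : ZMod k₂)
        = (b₁ : ZMod k₂) * ((ZMod.chineseRemainder hcop) (u : ZMod (k₁ * k₂))).2 := rfl
    rw [h0, crt_snd hcop]
    push_cast
    ring
  have hFF : ∀ u : (ZMod (k₁ * k₂))ˣ,
      FF s m (k₁ * k₂) (u : ZMod (k₁ * k₂))
        = (fun p : (ZMod k₁)ˣ × (ZMod k₂)ˣ =>
            FF s m k₁ (p.1 : ZMod k₁) * FF s m k₂ (p.2 : ZMod k₂)) (Φ u) := by
    intro u
    dsimp only
    rw [FF, FF, FF, GG_mult hcop hb, ← hΦ1 u, ← hΦ2 u,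
      EE_split (NeZero.ne k₁) (NeZero.ne k₂) hb]
    have e₁ : EE k₁ (b₂ * -(m * (((u : ZMod (k₁ * k₂)).val : ℕ) : ℤ)))
        = EE k₁ (-(m * ((((Φ u).1 : ZMod k₁).val : ℕ) : ℤ))) := by
      apply EE_zmod
      push_cast [ZMod.natCast_zmod_val, hΦ1 u]
      ring
    have e₂ : EE k₂ (b₁ * -(m * (((u : ZMod (k₁ * k₂)).val : ℕ) : ℤ)))
        = EE k₂ (-(m * ((((Φ u).2 : ZMod k₂).val : ℕ) : ℤ))) := by
      apply EE_zmod
      push_cast [ZMod.natCast_zmod_val, hΦ2 u]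
      ring
    rw [e₁, e₂, show ((k₁ * k₂ : ℕ) : ℂ)⁻¹ = (k₁ : ℂ)⁻¹ * (k₂ : ℂ)⁻¹ by
      push_cast; rw [mul_inv]]
    rw [show ((k₁ : ℂ)⁻¹ * (k₂ : ℂ)⁻¹ * (GG k₁ ((Φ u).1 : ZMod k₁) * GG k₂ ((Φ u).2 : ZMod k₂)))
        = ((k₁ : ℂ)⁻¹ * GG k₁ ((Φ u).1 : ZMod k₁)) * ((k₂ : ℂ)⁻¹ * GG k₂ ((Φ u).2 : ZMod k₂))
        by ring, mul_pow]
    ring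
  rw [Fintype.sum_equiv Φ _
      (fun p : (ZMod k₁)ˣ × (ZMod k₂)ˣ =>
        FF s m k₁ (p.1 : ZMod k₁) * FF s m k₂ (p.2 : ZMod k₂)) hFF,
    Fintype.sum_prod_type]
  dsimp only
  rw [← Finset.sum_mul_sum]

/-- `A_k(m)` is multiplicative in `k`: for coprime `k₁, k₂`,
`A_{k₁k₂}(m) = A_{k₁}(m) A_{k₂}(m)`. -/
theorem hardyA_multiplicative (s m k₁ k₂ : ℕ) (h₁ : 0 < k₁) (h₂ : 0 < k₂)
    (hcop : Nat.Coprime k₁ k₂) :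
    hardyA s m (k₁ * k₂) = hardyA s m k₁ * hardyA s m k₂ :=
  hardyA_multiplicative' s m k₁ k₂ h₁ h₂ hcop
end

section
/- For s = 3, an odd prime p, and even positive integer r: A_{p^r}(m) = 0 if r > ord_p(m)+1; A_{p^r}(m) = −p^{−r/2−1} if r = ord_p(m)+1; and A_{p^r}(m) = (p−1)·p^{−r/2−1} if r < ord_p(m)+1. -/
open scoped BigOperators Real

open Finset

noncomputable def ee (x : ℂ) : ℂ := Complex.exp (2 * Real.pi * Complex.I * x)

lemma ee_add (x y : ℂ) : ee (x + y) = ee x * ee y := by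
  simp [ee, mul_add, Complex.exp_add]

lemma ee_int (n : ℤ) : ee n = 1 := by
  rw [ee, show (2 * (Real.pi:ℂ) * Complex.I) * n = n * (2 * Real.pi * Complex.I) by ring]
  exact Complex.exp_int_mul_two_pi_mul_I n

lemma ee_nat (n : ℕ) : ee n = 1 := by simpa using ee_int n

lemma ee_zero : ee 0 = 1 := by simpa using ee_nat 0

lemma ee_pow (x : ℂ) (n : ℕ) : ee x ^ n = ee (n * x) := by
  simp [ee, ← Complex.exp_nat_mul]; ring_nf

lemma ee_eq_one_iff {N : ℕ} (hN : 0 < N) (a : ℤ) :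
    ee ((a : ℂ) / N) = 1 ↔ (N : ℤ) ∣ a := by
  rw [ee, Complex.exp_eq_one_iff]
  have hπ : (2 * (Real.pi:ℂ) * Complex.I) ≠ 0 := by
    simp [Real.pi_ne_zero, Complex.I_ne_zero]
  have hNc : (N : ℂ) ≠ 0 := Nat.cast_ne_zero.2 hN.ne'
  constructor
  · rintro ⟨n, hn⟩
    rw [show ((n:ℂ)) * (2 * Real.pi * Complex.I) = (2 * (Real.pi:ℂ) * Complex.I) * n by ring]
      at hn
    have h2 : (a : ℂ) / N = n := mul_left_cancel₀ hπ hn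
    have h3 : (a : ℂ) = n * N := by rw [← h2]; field_simp
    refine ⟨n, ?_⟩
    exact_mod_cast (by rw [h3]; ring : (a:ℂ) = (N:ℂ) * n)
  · rintro ⟨c, rfl⟩
    refine ⟨c, ?_⟩
    push_cast
    field_simp

lemma geom_ee {N : ℕ} (hN : 0 < N) (a : ℤ) :
    ∑ h ∈ range N, ee ((a : ℂ) * h / N) = if (N : ℤ) ∣ a then (N : ℂ) else 0 := by
  have key : ∀ h : ℕ, ee ((a : ℂ) * h / N) = ee ((a:ℂ)/N) ^ h := by
    intro h
    rw [ee_pow]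
    ring_nf
  simp_rw [key]
  by_cases hd : (N : ℤ) ∣ a
  · rw [if_pos hd, (ee_eq_one_iff hN a).2 hd]
    simp
  · rw [if_neg hd]
    have hne : ee ((a:ℂ)/N) ≠ 1 := fun h => hd ((ee_eq_one_iff hN a).1 h)
    rw [geom_sum_eq hne]
    have : ee ((a:ℂ)/N) ^ N = 1 := by
      rw [ee_pow]
      have hNc : (N : ℂ) ≠ 0 := Nat.cast_ne_zero.2 hN.ne'
      rw [show (N:ℂ) * ((a:ℂ)/N) = (a:ℂ) by field_simp]
      exact ee_int a
    rw [this]; simp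

lemma Icc_sum_eq_range_sum {N : ℕ} (f : ℕ → ℂ) (hf : f N = f 0) :
    ∑ h ∈ Icc 1 N, f h = ∑ h ∈ range N, f h := by
  have h1 : ∑ h ∈ Icc 1 N, f h = ∑ h ∈ range N, f (1 + h) := by
    rw [← Finset.Ico_add_one_right_eq_Icc, Finset.sum_Ico_eq_sum_range]
    simp
  have h2 : ∑ h ∈ range (N+1), f h = ∑ h ∈ range N, f (h+1) + f 0 :=
    Finset.sum_range_succ' f N
  have h3 : ∑ h ∈ range (N+1), f h = ∑ h ∈ range N, f h + f N :=
    Finset.sum_range_succ f N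
  simp only [add_comm 1] at h1
  rw [h1]
  have := h3.symm.trans h2
  rw [hf] at this
  exact (add_right_cancel this).symm

lemma geom_ee_nat {N : ℕ} (hN : 0 < N) (a : ℕ) :
    ∑ h ∈ range N, ee ((a : ℂ) * h / N) = if N ∣ a then (N : ℂ) else 0 := by
  have := geom_ee hN (a : ℤ)
  push_cast at this
  rw [this]
  simp [Int.natCast_dvd_natCast]

lemma Icc_geom_ee {N : ℕ} (hN : 0 < N) (a : ℕ) :
    ∑ h ∈ Icc 1 N, ee ((a : ℂ) * h / N) = if N ∣ a then (N : ℂ) else 0 := by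
  have hNc : (N : ℂ) ≠ 0 := Nat.cast_ne_zero.2 hN.ne'
  have hf : ee ((a:ℂ) * (N:ℂ) / N) = ee ((a:ℂ) * (0:ℕ) / N) := by
    rw [show ((a:ℂ) * (N:ℂ) / N) = ((a:ℕ):ℂ) by field_simp]
    simp [ee_nat, ee_zero]
  rw [Icc_sum_eq_range_sum (fun h => ee ((a : ℂ) * h / N)) hf, geom_ee_nat hN a]

lemma gauss_range {p : ℕ} (hp : p.Prime) (hp2 : p ≠ 2) {t : ℕ} (ht : 0 < t) {h : ℕ}
    (hh : Nat.Coprime h p) :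
    ∑ j ∈ range (p ^ t * p ^ t), ee ((h:ℂ) * (j:ℂ)^2 / ((p:ℂ)^t * (p:ℂ)^t)) = (p:ℂ)^t := by
  set P := p ^ t with hPdef
  have hP : 0 < P := pow_pos hp.pos t
  have hPc : (P : ℂ) ≠ 0 := Nat.cast_ne_zero.2 hP.ne'
  have hPcast : ((P:ℕ):ℂ) = (p:ℂ)^t := by push_cast [hPdef]; ring
  -- reindex
  have reidx : ∑ j ∈ range (P * P), ee ((h:ℂ) * (j:ℂ)^2 / ((p:ℂ)^t * (p:ℂ)^t))
      = ∑ x ∈ range P ×ˢ range P, ee ((h:ℂ) * ((x.1 + P * x.2 : ℕ):ℂ)^2 / ((p:ℂ)^t * (p:ℂ)^t)) := by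
    apply Finset.sum_nbij' (fun j => (j % P, j / P)) (fun x => x.1 + P * x.2)
    · intro j hj
      simp only [Finset.mem_range] at hj
      simp only [Finset.mem_product, Finset.mem_range]
      exact ⟨Nat.mod_lt _ hP, Nat.div_lt_of_lt_mul (by rwa [mul_comm] at hj)⟩
    · intro x hx
      simp only [Finset.mem_product, Finset.mem_range] at hx
      simp only [Finset.mem_range]
      have hx2 : x.2 + 1 ≤ P := hx.2
      calc x.1 + P * x.2 < P + P * x.2 := by omega
        _ = P * (x.2 + 1) := by ring
        _ ≤ P * P := Nat.mul_le_mul_left P hx2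
    · intro j hj
      exact Nat.mod_add_div j P
    · intro x hx
      simp only [Finset.mem_product, Finset.mem_range] at hx
      ext
      · simp [Nat.add_mul_mod_self_left, Nat.mod_eq_of_lt hx.1]
      · simp [Nat.add_mul_div_left _ _ hP, Nat.div_eq_of_lt hx.1]
    · intro j hj
      rw [Nat.mod_add_div j P]
  rw [reidx, Finset.sum_product]
  have split : ∀ u v : ℕ, (h:ℂ) * ((u + P * v : ℕ):ℂ)^2 / ((p:ℂ)^t * (p:ℂ)^t)
      = (h:ℂ) * (u:ℂ)^2 / ((p:ℂ)^t * (p:ℂ)^t) + ((2*h*u : ℕ):ℂ) * (v:ℂ) / ((p:ℂ)^t)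
        + ((h*v^2 : ℕ):ℂ) := by
    intro u v
    have : ((P:ℕ):ℂ) = (p:ℂ)^t := hPcast
    push_cast [hPdef]
    have hpc : ((p:ℂ))^t ≠ 0 := by rw [← hPcast]; exact hPc
    field_simp
    ring
  have inner : ∀ u ∈ range P,
      ∑ v ∈ range P, ee ((h:ℂ) * ((u + P * v : ℕ):ℂ)^2 / ((p:ℂ)^t * (p:ℂ)^t))
      = if u = 0 then (p:ℂ)^t else 0 := by
    intro u hu
    simp only [Finset.mem_range] at hu
    have : ∀ v : ℕ, ee ((h:ℂ) * ((u + P * v : ℕ):ℂ)^2 / ((p:ℂ)^t * (p:ℂ)^t))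
        = ee ((h:ℂ) * (u:ℂ)^2 / ((p:ℂ)^t * (p:ℂ)^t)) * ee (((2*h*u : ℕ):ℂ) * (v:ℂ) / ((p:ℂ)^t)) := by
      intro v
      rw [split u v, ee_add, ee_add, ee_nat, mul_one]
    simp_rw [this, ← Finset.mul_sum]
    have hgeom : ∑ v ∈ range P, ee (((2*h*u : ℕ):ℂ) * (v:ℂ) / ((P:ℕ):ℂ))
        = if P ∣ 2*h*u then (P:ℂ) else 0 := geom_ee_nat hP _
    rw [hPcast] at hgeom
    rw [hgeom]
    have hcop : Nat.Coprime P (2 * h) := by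
      have h2 : Nat.Coprime p 2 := (Nat.coprime_primes hp Nat.prime_two).2 hp2
      have hph : Nat.Coprime p h := hh.symm
      exact Nat.Coprime.pow_left t (Nat.Coprime.mul_right h2 hph)
    have hdvd : P ∣ 2*h*u ↔ u = 0 := by
      constructor
      · intro hd
        have : P ∣ u := hcop.dvd_of_dvd_mul_left hd
        exact Nat.eq_zero_of_dvd_of_lt this hu
      · rintro rfl; simp
    rw [if_congr hdvd rfl rfl]
    by_cases hu0 : u = 0
    · subst hu0
      simp [ee_zero, hPcast]
    · simp [hu0]
  rw [Finset.sum_congr rfl inner]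
  simp [Finset.sum_ite_eq' (range P) 0, hP]

lemma Icc_geom_ee_int {N : ℕ} (hN : 0 < N) (a : ℤ) :
    ∑ h ∈ Icc 1 N, ee ((a : ℂ) * h / N) = if (N:ℤ) ∣ a then (N : ℂ) else 0 := by
  have hNc : (N : ℂ) ≠ 0 := Nat.cast_ne_zero.2 hN.ne'
  have hf : ee ((a:ℂ) * (N:ℂ) / N) = ee ((a:ℂ) * (0:ℕ) / N) := by
    rw [show ((a:ℂ) * (N:ℂ) / N) = ((a:ℤ):ℂ) by field_simp]
    simp [ee_int, ee_zero]
  rw [Icc_sum_eq_range_sum (fun h => ee ((a : ℂ) * h / N)) hf, geom_ee hN a]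

lemma full_sum (m : ℕ) {M : ℕ} (hM : 0 < M) :
    ∑ h ∈ Icc 1 M, ee (-((m:ℂ) * h / M)) = if M ∣ m then (M : ℂ) else 0 := by
  have key : ∀ h : ℕ, ee (-((m:ℂ) * h / M)) = ee ((((-(m:ℤ)):ℤ):ℂ) * h / M) := by
    intro h; congr 1; push_cast; ring
  simp_rw [key]
  rw [Icc_geom_ee_int hM (-(m:ℤ))]
  have : ((M:ℤ) ∣ -(m:ℤ)) ↔ M ∣ m := by
    rw [dvd_neg, Int.natCast_dvd_natCast]
  rw [if_congr this rfl rfl]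

lemma ramanujan {p : ℕ} (hp : p.Prime) {r : ℕ} (hr : 0 < r) (m : ℕ) :
    ∑ h ∈ (Icc 1 (p^r)).filter (fun h => Nat.gcd h (p^r) = 1), ee (-((m:ℂ) * h / ((p:ℂ)^r)))
      = (if p^r ∣ m then ((p:ℂ)^r) else 0) - (if p^(r-1) ∣ m then ((p:ℂ)^(r-1)) else 0) := by
  have hN : 0 < p ^ r := pow_pos hp.pos r
  set f : ℕ → ℂ := fun h => ee (-((m:ℂ) * h / ((p:ℂ)^r))) with hfdef
  have hsplit := Finset.sum_filter_add_sum_filter_not (Icc 1 (p^r)) (fun h => Nat.gcd h (p^r) = 1) f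
  have hfull : ∑ h ∈ Icc 1 (p^r), f h = if p^r ∣ m then ((p:ℂ)^r) else 0 := by
    have h0 := full_sum m hN
    simpa [hfdef, Nat.cast_pow] using h0
  have hNr : p ^ r = p * p^(r-1) := by
    rw [← pow_succ']
    congr 1; omega
  have hdvd_of : ∀ h ∈ Icc 1 (p^r), ¬ Nat.gcd h (p^r) = 1 → p ∣ h := by
    intro h _ h3
    by_contra hnd
    exact h3 (Nat.Coprime.pow_right r ((hp.coprime_iff_not_dvd.2 hnd).symm))
  have hnot : ∑ h ∈ (Icc 1 (p^r)).filter (fun h => ¬ Nat.gcd h (p^r) = 1), f h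
      = if p^(r-1) ∣ m then ((p:ℂ)^(r-1)) else 0 := by
    have hstep : ∑ h ∈ (Icc 1 (p^r)).filter (fun h => ¬ Nat.gcd h (p^r) = 1), f h
        = ∑ h' ∈ Icc 1 (p^(r-1)), f (p * h') := by
      apply Finset.sum_nbij' (fun h => h / p) (fun h' => p * h')
      · intro h hh
        simp only [Finset.mem_filter, Finset.mem_Icc] at hh
        obtain ⟨⟨h1, h2⟩, h3⟩ := hh
        have hpd : p ∣ h := hdvd_of h (Finset.mem_Icc.2 ⟨h1, h2⟩) h3
        obtain ⟨c, rfl⟩ := hpd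
        simp only [Finset.mem_Icc]
        rw [Nat.mul_div_cancel_left c hp.pos]
        constructor
        · rcases Nat.eq_zero_or_pos c with rfl | hc
          · omega
          · exact hc
        · rw [hNr] at h2
          exact le_of_mul_le_mul_left h2 hp.pos
      · intro h' hh'
        simp only [Finset.mem_Icc] at hh'
        simp only [Finset.mem_filter, Finset.mem_Icc]
        refine ⟨⟨by nlinarith [hp.pos], ?_⟩, ?_⟩
        · rw [hNr]; exact Nat.mul_le_mul_left p hh'.2
        · intro hcop
          have hcop' : Nat.Coprime (p * h') (p ^ r) := hcop
          rw [Nat.coprime_pow_right_iff hr] at hcop'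
          exact (hp.coprime_iff_not_dvd.1 hcop'.symm) ⟨h', rfl⟩
      · intro h hh
        simp only [Finset.mem_filter, Finset.mem_Icc] at hh
        obtain ⟨⟨h1, h2⟩, h3⟩ := hh
        exact Nat.mul_div_cancel' (hdvd_of h (Finset.mem_Icc.2 ⟨h1, h2⟩) h3)
      · intro h' hh'
        exact Nat.mul_div_cancel_left h' hp.pos
      · intro h hh
        simp only [Finset.mem_filter, Finset.mem_Icc] at hh
        obtain ⟨⟨h1, h2⟩, h3⟩ := hh
        rw [Nat.mul_div_cancel' (hdvd_of h (Finset.mem_Icc.2 ⟨h1, h2⟩) h3)]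
    rw [hstep]
    have hM : 0 < p^(r-1) := pow_pos hp.pos _
    have harg : ∀ h' : ℕ, f (p * h') = ee (-((m:ℂ) * h' / ((p^(r-1) : ℕ) : ℂ))) := by
      intro h'
      have hpc : (p:ℂ) ≠ 0 := Nat.cast_ne_zero.2 hp.pos.ne'
      have hMc : ((p:ℂ))^(r-1) ≠ 0 := pow_ne_zero _ hpc
      simp only [hfdef]
      congr 1
      have hpow : ((p:ℂ))^r = (p:ℂ) * (p:ℂ)^(r-1) := by
        rw [← pow_succ']; congr 1; omega
      push_cast
      rw [hpow]
      field_simp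
    simp_rw [harg]
    rw [full_sum m hM]
    simp [Nat.cast_pow]
  have hkey : ∑ h ∈ (Icc 1 (p^r)).filter (fun h => Nat.gcd h (p^r) = 1), f h
      = (∑ h ∈ Icc 1 (p^r), f h)
        - ∑ h ∈ (Icc 1 (p^r)).filter (fun h => ¬ Nat.gcd h (p^r) = 1), f h := by
    rw [← hsplit]; ring
  rw [hkey, hfull, hnot]

/-- For `s = 3`, an odd prime `p` and even positive `r`:
`A_{p^r}(m) = 0` if `r > ord_p(m)+1`, `A_{p^r}(m) = −p^{−r/2−1}` if `r = ord_p(m)+1`,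
and `A_{p^r}(m) = (p−1) p^{−r/2−1}` if `r < ord_p(m)+1`. -/
theorem hardyA_odd_prime_even_exponent (p : ℕ) (hp : p.Prime) (hp2 : p ≠ 2)
    (r : ℕ) (hr : Even r) (hrpos : 0 < r) (m : ℕ) (hm : 0 < m) :
    (r > m.factorization p + 1 → hardyA 3 m (p ^ r) = 0) ∧
    (r = m.factorization p + 1 → hardyA 3 m (p ^ r) = -((p : ℂ) ^ (r / 2 + 1))⁻¹) ∧
    (r < m.factorization p + 1 →
      hardyA 3 m (p ^ r) = ((p : ℂ) - 1) * ((p : ℂ) ^ (r / 2 + 1))⁻¹) := by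
  obtain ⟨t, ht2⟩ := hr
  have ht : 0 < t := by omega
  have hpc : (p:ℂ) ≠ 0 := Nat.cast_ne_zero.2 hp.pos.ne'
  have hrt : r / 2 = t := by omega
  have hNeq : p ^ r = p ^ t * p ^ t := by rw [ht2, pow_add]
  have hN : 0 < p ^ r := pow_pos hp.pos r
  have hNcast : ((p^r : ℕ):ℂ) = (p:ℂ)^t * (p:ℂ)^t := by rw [hNeq]; push_cast; ring
  have hNc : ((p^r : ℕ):ℂ) ≠ 0 := Nat.cast_ne_zero.2 hN.ne'
  have hQc : (p:ℂ)^t * (p:ℂ)^t ≠ 0 := by rw [← hNcast]; exact hNc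
  -- inner Gauss sum
  have hinner : ∀ h : ℕ, Nat.Coprime h p →
      ∑ j ∈ Finset.Icc 1 (p^r),
        Complex.exp (2 * Real.pi * Complex.I * h * j ^ 2 / ((p^r : ℕ):ℂ)) = (p:ℂ)^t := by
    intro h hcop
    have h1 : ∀ j : ℕ, Complex.exp (2 * Real.pi * Complex.I * h * j ^ 2 / ((p^r : ℕ):ℂ))
        = ee ((h:ℂ) * (j:ℂ)^2 / ((p:ℂ)^t * (p:ℂ)^t)) := by
      intro j; rw [ee]; rw [hNcast]; ring_nf
    simp_rw [h1]
    rw [hNeq]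
    have hend : ee ((h:ℂ) * ((p^t*p^t : ℕ):ℂ)^2 / ((p:ℂ)^t * (p:ℂ)^t))
        = ee ((h:ℂ) * ((0:ℕ):ℂ)^2 / ((p:ℂ)^t * (p:ℂ)^t)) := by
      have : (h:ℂ) * ((p^t*p^t : ℕ):ℂ)^2 / ((p:ℂ)^t * (p:ℂ)^t) = ((h * (p^t*p^t) : ℕ):ℂ) := by
        have : ((p^t*p^t : ℕ):ℂ) = (p:ℂ)^t * (p:ℂ)^t := by push_cast; ring
        rw [this]; push_cast; field_simp
      rw [this, ee_nat]
      simp [ee_zero]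
    rw [Icc_sum_eq_range_sum _ hend, gauss_range hp hp2 ht hcop]
  -- term rewrite
  have hterm : ∀ h ∈ (Finset.Icc 1 (p^r)).filter (fun h => Nat.gcd h (p^r) = 1),
      (((p^r : ℕ):ℂ)⁻¹ * ∑ j ∈ Finset.Icc 1 (p^r),
          Complex.exp (2 * Real.pi * Complex.I * h * j ^ 2 / ((p^r : ℕ):ℂ))) ^ 3 *
        Complex.exp (-(2 * Real.pi * Complex.I * m * h / ((p^r : ℕ):ℂ)))
      = (((p:ℂ)^t)⁻¹)^3 * ee (-((m:ℂ) * h / ((p:ℂ)^r))) := by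
    intro h hmem
    simp only [Finset.mem_filter, Finset.mem_Icc] at hmem
    have hcop : Nat.Coprime h p := by
      rw [← Nat.coprime_pow_right_iff hrpos]; exact hmem.2
    rw [hinner h hcop]
    have hc : ((p^r : ℕ):ℂ)⁻¹ * (p:ℂ)^t = ((p:ℂ)^t)⁻¹ := by
      rw [hNcast]; field_simp
    rw [hc]
    congr 1
    rw [ee]
    have : ((p^r : ℕ):ℂ) = (p:ℂ)^r := by push_cast; ring
    rw [this]; ring_nf
  have key : hardyA 3 m (p^r) = (((p:ℂ)^t)⁻¹)^3 *
      ((if p^r ∣ m then ((p:ℂ)^r) else 0) - (if p^(r-1) ∣ m then ((p:ℂ)^(r-1)) else 0)) := by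
    rw [hardyA, Finset.sum_congr rfl hterm, ← Finset.mul_sum, ramanujan hp hrpos m]
  have hdvd : ∀ k, p^k ∣ m ↔ k ≤ m.factorization p := fun k =>
    Nat.Prime.pow_dvd_iff_le_factorization hp hm.ne'
  have hval : (((p:ℂ)^t)⁻¹)^3 * (p:ℂ)^(r-1) = ((p:ℂ)^(t+1))⁻¹ := by
    rw [inv_pow, ← pow_mul, show t*3 = (r-1) + (t+1) by omega, pow_add, mul_inv]
    field_simp
  refine ⟨fun hcase => ?_, fun hcase => ?_, fun hcase => ?_⟩ <;> rw [key] <;> try simp only [hrt]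
  · have h1 : ¬ p^r ∣ m := fun hd => by have := (hdvd r).1 hd; omega
    have h2 : ¬ p^(r-1) ∣ m := fun hd => by have := (hdvd (r-1)).1 hd; omega
    rw [if_neg h1, if_neg h2]
    simp
  · have h1 : ¬ p^r ∣ m := fun hd => by have := (hdvd r).1 hd; omega
    rw [if_neg h1, if_pos ((hdvd (r-1)).2 (by omega)), zero_sub, mul_neg, hval]
  · rw [if_pos ((hdvd r).2 (by omega)), if_pos ((hdvd (r-1)).2 (by omega))]
    have hps : (p:ℂ)^r = (p:ℂ) * (p:ℂ)^(r-1) := by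
      rw [← pow_succ']; congr 1; omega
    rw [hps, show ((p:ℂ) * (p:ℂ)^(r-1) - (p:ℂ)^(r-1)) = ((p:ℂ) - 1) * (p:ℂ)^(r-1) by ring]
    rw [mul_comm (((p:ℂ)^t)⁻¹^3), mul_assoc, mul_comm ((p:ℂ)^(r-1)), hval]
end
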